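/- arXiv:1612.03293 — 8 statements merged into one kernel-verified Lean document; each statement's English description precedes it below -/
import Mathlib

section
/- Let Γ be a (v,k,λ)-graph with bipartition {V₁, V₂} and let S be a nonempty subset of V₁. Let m = ⌊λ(|S|-1)/k⌋ + 1. Then |N(S)|/|S| ≥ (2km - λ(|S|-1)) / (m(m+1)). -/
/-- Lemma 2.1 (first inequality): for a (v,k,λ)-graph (given as the bipartite
incidence relation `R` between the two parts) and a nonempty `S ⊆ V₁`, with
`m = ⌊λ(|S|-1)/k⌋ + 1`, we have `|N(S)|/|S| ≥ (2km - λ(|S|-1))/(m(m+1))`. -/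
theorem stmt1 {V1 V2 : Type*} [Fintype V1] [Fintype V2]
    (R : V1 → V2 → Prop) [∀ a b, Decidable (R a b)]
    (v k lam : ℕ) (hk : 0 < k)
    (hcard1 : Fintype.card V1 = v) (hcard2 : Fintype.card V2 = v)
    (hdeg1 : ∀ a : V1, (Finset.univ.filter (fun b : V2 => R a b)).card = k)
    (hdeg2 : ∀ b : V2, (Finset.univ.filter (fun a : V1 => R a b)).card = k)
    (hlam1 : ∀ a a' : V1, a ≠ a' →
      (Finset.univ.filter (fun b : V2 => R a b ∧ R a' b)).card = lam)
    (hlam2 : ∀ b b' : V2, b ≠ b' →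
      (Finset.univ.filter (fun a : V1 => R a b ∧ R a b')).card = lam)
    (S : Finset V1) (hS : S.Nonempty)
    (m : ℕ) (hm : m = lam * (S.card - 1) / k + 1) :
    ((2 * k * m : ℝ) - lam * (S.card - 1)) / (m * (m + 1)) ≤
      ((Finset.univ.filter (fun b : V2 => ∃ a ∈ S, R a b)).card : ℝ) / S.card := by
  classical
  set s := S.card with hs
  set T := Finset.univ.filter (fun b : V2 => ∃ a ∈ S, R a b) with hT
  set d : V2 → ℕ := fun b => (S.filter (fun a => R a b)).card with hd
  have hs1 : 1 ≤ s := hS.card_pos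
  have hm1 : 1 ≤ m := by rw [hm]; exact Nat.le_add_left 1 _
  -- sum of degrees into S
  have sum1 : ∑ b : V2, d b = s * k := by
    simp only [hd, Finset.card_filter]
    rw [Finset.sum_comm]
    have : ∀ a : V1, (∑ b : V2, if R a b then 1 else 0) = k := by
      intro a
      rw [← Finset.card_filter]
      exact hdeg1 a
    rw [Finset.sum_congr rfl fun a _ => this a, Finset.sum_const, smul_eq_mul]
  -- sum of squares of degrees
  have sum2 : ∑ b : V2, d b * d b = s * k + s * (s - 1) * lam := by
    have step : ∀ b : V2, d b * d b =
        ∑ a ∈ S, ∑ a' ∈ S, (if R a b ∧ R a' b then 1 else 0) := by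
      intro b
      rw [hd]
      simp only [Finset.card_filter]
      rw [Finset.sum_mul_sum]
      refine Finset.sum_congr rfl fun a _ => Finset.sum_congr rfl fun a' _ => ?_
      by_cases h1 : R a b <;> by_cases h2 : R a' b <;> simp [h1, h2]
    calc ∑ b : V2, d b * d b
        = ∑ b : V2, ∑ a ∈ S, ∑ a' ∈ S, (if R a b ∧ R a' b then 1 else 0) :=
          Finset.sum_congr rfl fun b _ => step b
      _ = ∑ a ∈ S, ∑ a' ∈ S, ∑ b : V2, (if R a b ∧ R a' b then 1 else 0) := by
          rw [Finset.sum_comm]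
          exact Finset.sum_congr rfl fun a _ => Finset.sum_comm
      _ = ∑ a ∈ S, ∑ a' ∈ S,
            (Finset.univ.filter (fun b : V2 => R a b ∧ R a' b)).card := by
          simp only [← Finset.card_filter]
      _ = ∑ _a ∈ S, (k + (s - 1) * lam) := by
          refine Finset.sum_congr rfl fun a ha => ?_
          rw [← Finset.add_sum_erase _ _ ha]
          congr 1
          · have : Finset.univ.filter (fun b : V2 => R a b ∧ R a b)
                = Finset.univ.filter (fun b : V2 => R a b) := by
              simp only [and_self]
            rw [this]
            exact hdeg1 a
          · have : ∀ a' ∈ S.erase a,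
                (Finset.univ.filter (fun b : V2 => R a b ∧ R a' b)).card = lam := by
              intro a' ha'
              exact hlam1 a a' (Ne.symm (Finset.mem_erase.1 ha').1)
            rw [Finset.sum_congr rfl this, Finset.sum_const, smul_eq_mul,
              Finset.card_erase_of_mem ha]
      _ = s * k + s * (s - 1) * lam := by
          rw [Finset.sum_const, smul_eq_mul]
          ring
  -- restrict sums to T: outside T the degree is 0
  have hzero : ∀ b : V2, b ∉ T → d b = 0 := by
    intro b hb
    rw [hT, Finset.mem_filter] at hb
    push_neg at hb
    rw [hd, Finset.card_eq_zero, Finset.filter_eq_empty_iff]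
    intro a ha
    exact hb (Finset.mem_univ b) a ha
  have sum1T : ∑ b ∈ T, d b = s * k := by
    rw [← sum1]
    exact Finset.sum_subset (Finset.subset_univ T) fun b _ hb => hzero b hb
  have sum2T : ∑ b ∈ T, d b * d b = s * k + s * (s - 1) * lam := by
    rw [← sum2]
    refine Finset.sum_subset (Finset.subset_univ T) fun b _ hb => ?_
    simp [hzero b hb]
  -- pointwise inequality via consecutive integers
  have point : ∀ b : V2, ((2 * m + 1 : ℝ)) * d b - (d b : ℝ) * d b ≤ m * (m + 1) := by
    intro b
    rcases le_or_gt (d b) m with h | h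
    · have h' : (d b : ℝ) ≤ m := by exact_mod_cast h
      have h0 : (0 : ℝ) ≤ d b := by positivity
      nlinarith
    · have h' : (m : ℝ) + 1 ≤ d b := by exact_mod_cast h
      nlinarith
  -- sum the pointwise inequality
  have key : (2 * m + 1 : ℝ) * (s * k) - (s * k + s * (s - 1) * lam) ≤
      (T.card : ℝ) * (m * (m + 1)) := by
    have h1 : ∑ b ∈ T, ((2 * m + 1 : ℝ) * d b - (d b : ℝ) * d b) ≤
        ∑ _b ∈ T, ((m : ℝ) * (m + 1)) :=
      Finset.sum_le_sum fun b _ => point b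
    rw [Finset.sum_const, nsmul_eq_mul] at h1
    have h2 : ∑ b ∈ T, ((2 * m + 1 : ℝ) * d b - (d b : ℝ) * d b)
        = (2 * m + 1 : ℝ) * (s * k) - (s * k + s * (s - 1) * lam) := by
      rw [Finset.sum_sub_distrib, ← Finset.mul_sum]
      have c1 : ∑ b ∈ T, (d b : ℝ) = (s * k : ℕ) := by
        rw [← sum1T]; push_cast; ring
      have c2 : ∑ b ∈ T, (d b : ℝ) * d b = ((s * k + s * (s - 1) * lam : ℕ) : ℝ) := by
        rw [← sum2T]; push_cast; ring
      rw [c1, c2]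
      push_cast [Nat.cast_sub hs1]
      ring
    linarith [h2 ▸ h1]
  -- finish
  have hspos : (0 : ℝ) < s := by exact_mod_cast hs1
  have hmpos : (0 : ℝ) < m * (m + 1) := by
    have : (1 : ℝ) ≤ m := by exact_mod_cast hm1
    nlinarith
  rw [div_le_div_iff₀ hmpos hspos]
  have hsk : ((s : ℝ) - 1) ≥ 0 := by
    have : (1 : ℝ) ≤ s := by exact_mod_cast hs1
    linarith
  nlinarith [key]
end

section
/- Let k, λ be positive integers and s ≥ 1 an integer, and let m = ⌊λ(s-1)/k⌋ + 1. Then (2km - λ(s-1)) / (m(m+1)) ≥ k² / (k + λ(s-1)). -/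
/-- Elementary inequality: for positive integers k, λ and s ≥ 1, with
`m = ⌊λ(s-1)/k⌋ + 1`, one has `(2km - λ(s-1))/(m(m+1)) ≥ k²/(k + λ(s-1))`. -/
theorem stmt2 (k lam s : ℕ) (hk : 0 < k) (hlam : 0 < lam) (hs : 1 ≤ s)
    (m : ℕ) (hm : m = lam * (s - 1) / k + 1) :
    ((k : ℚ)^2) / (k + lam * (s - 1)) ≤
      ((2 * k * m : ℚ) - lam * (s - 1)) / (m * (m + 1)) := by
  set t := lam * (s - 1) with htdef
  have hcast : ((s : ℚ) - 1) = ((s - 1 : ℕ) : ℚ) := by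
    rw [Nat.cast_sub hs]; push_cast; ring
  have h1 : k * (t / k) ≤ t := Nat.mul_div_le t k
  have h2 : t < k * (t / k + 1) := Nat.lt_mul_div_succ t hk
  have h1q : (k : ℚ) * (m - 1) ≤ (t : ℚ) := by
    rw [hm]; push_cast
    have := (Nat.cast_le (α := ℚ)).2 h1
    push_cast at this; linarith
  have h2q : (t : ℚ) < (k : ℚ) * m := by
    rw [hm]; push_cast
    have := (Nat.cast_lt (α := ℚ)).2 h2
    push_cast at this; linarith
  have hkq : (0 : ℚ) < k := by exact_mod_cast hk
  have hmq : (0 : ℚ) < m := by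
    rw [hm]; push_cast; positivity
  have htq : (0 : ℚ) ≤ t := by positivity
  have key : ((t : ℚ) - k * (m - 1)) * (k * m - t) ≥ 0 :=
    mul_nonneg (by linarith) (by linarith)
  have hd1 : (0 : ℚ) < (k : ℚ) + lam * ((s : ℚ) - 1) := by
    rw [hcast]; push_cast [htdef] at htq ⊢; linarith
  have hd2 : (0 : ℚ) < (m : ℚ) * (m + 1) := by positivity
  rw [div_le_div_iff₀ hd1 hd2]
  have hts : (lam : ℚ) * ((s : ℚ) - 1) = (t : ℚ) := by
    rw [hcast, htdef]; push_cast; ring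
  rw [hts]
  nlinarith [key, sq_nonneg ((k : ℚ) * m - t)]
end

section
/- Let Γ be a (v,k,λ)-graph with bipartition {V₁, V₂} and S a nonempty subset of V₁ (or V₂). Then |N(S)|/|S| ≥ k² / (k + λ(|S|-1)). -/
/-- Lemma 2.1 (second inequality): for a (v,k,λ)-graph (given as the bipartite
incidence relation `R`) and a nonempty `S ⊆ V₁`,
`|N(S)|/|S| ≥ k²/(k + λ(|S|-1))`. -/
theorem stmt3 {V1 V2 : Type*} [Fintype V1] [Fintype V2]
    (R : V1 → V2 → Prop) [∀ a b, Decidable (R a b)]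
    (v k lam : ℕ) (hk : 0 < k)
    (hcard1 : Fintype.card V1 = v) (hcard2 : Fintype.card V2 = v)
    (hdeg1 : ∀ a : V1, (Finset.univ.filter (fun b : V2 => R a b)).card = k)
    (hdeg2 : ∀ b : V2, (Finset.univ.filter (fun a : V1 => R a b)).card = k)
    (hlam1 : ∀ a a' : V1, a ≠ a' →
      (Finset.univ.filter (fun b : V2 => R a b ∧ R a' b)).card = lam)
    (hlam2 : ∀ b b' : V2, b ≠ b' →
      (Finset.univ.filter (fun a : V1 => R a b ∧ R a b')).card = lam)
    (S : Finset V1) (hS : S.Nonempty) :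
    ((k : ℝ)^2) / (k + lam * (S.card - 1)) ≤
      ((Finset.univ.filter (fun b : V2 => ∃ a ∈ S, R a b)).card : ℝ) / S.card := by
  classical
  set N := Finset.univ.filter (fun b : V2 => ∃ a ∈ S, R a b) with hN
  set d : V2 → ℕ := fun b => (S.filter (fun a => R a b)).card with hd
  have hdzero : ∀ b : V2, b ∉ N → d b = 0 := by
    intro b hb
    simp only [hN, Finset.mem_filter, Finset.mem_univ, true_and, not_exists] at hb
    simp only [hd, Finset.card_eq_zero, Finset.filter_eq_empty_iff]
    intro a ha
    exact fun h => hb a ⟨ha, h⟩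
  -- total edge count
  have hsum : ∑ b : V2, d b = k * S.card := by
    simp only [hd, Finset.card_filter]
    rw [Finset.sum_comm]
    simp only [← Finset.card_filter]
    rw [Finset.sum_congr rfl (fun a _ => hdeg1 a)]
    simp [mul_comm]
  -- sum of squares
  have hsq : ∑ b : V2, d b ^ 2 = S.card * (k + lam * (S.card - 1)) := by
    have step : ∀ b : V2, d b ^ 2 =
        ∑ a ∈ S, ∑ a' ∈ S, if R a b ∧ R a' b then 1 else 0 := by
      intro b
      simp only [hd, sq, Finset.card_filter, Finset.sum_mul_sum]
      refine Finset.sum_congr rfl fun a _ => Finset.sum_congr rfl fun a' _ => ?_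
      by_cases h1 : R a b <;> by_cases h2 : R a' b <;> simp [h1, h2]
    rw [Finset.sum_congr rfl fun b _ => step b, Finset.sum_comm]
    have key : ∀ a ∈ S, (∑ a' ∈ S, ∑ b : V2, if R a b ∧ R a' b then 1 else 0)
        = k + lam * (S.card - 1) := by
      intro a ha
      have hval : ∀ a' : V1, (∑ b : V2, if R a b ∧ R a' b then (1:ℕ) else 0)
          = (Finset.univ.filter (fun b : V2 => R a b ∧ R a' b)).card := by
        intro a'; rw [Finset.card_filter]
      rw [Finset.sum_congr rfl fun a' _ => hval a']
      rw [← Finset.add_sum_erase _ _ ha]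
      have h1 : (Finset.univ.filter (fun b : V2 => R a b ∧ R a b)).card = k := by
        rw [← hdeg1 a]; congr 1; ext b; simp
      have h2 : ∀ a' ∈ S.erase a,
          (Finset.univ.filter (fun b : V2 => R a b ∧ R a' b)).card = lam :=
        fun a' ha' => hlam1 a a' (Finset.ne_of_mem_erase ha').symm
      rw [h1, Finset.sum_congr rfl h2, Finset.sum_const, smul_eq_mul,
        Finset.card_erase_of_mem ha, mul_comm]
    rw [Finset.sum_congr rfl (fun a _ => Finset.sum_comm),
      Finset.sum_congr rfl key, Finset.sum_const, smul_eq_mul]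
  -- restrict sums to N
  have hsub : ∀ (f : ℕ → ℕ), f 0 = 0 → ∑ b ∈ N, f (d b) = ∑ b : V2, f (d b) := by
    intro f hf
    exact Finset.sum_subset (Finset.subset_univ N)
      (fun b _ hb => by rw [hdzero b hb, hf])
  have hsumN : ∑ b ∈ N, d b = k * S.card := by
    have := hsub id rfl; simpa [hsum] using this
  have hsqN : ∑ b ∈ N, d b ^ 2 = S.card * (k + lam * (S.card - 1)) := by
    have := hsub (fun n => n ^ 2) (by norm_num); simpa [hsq] using this
  -- Cauchy–Schwarz
  have cs := sq_sum_le_card_mul_sum_sq (s := N) (f := fun b => (d b : ℝ))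
  have hc1 : 1 ≤ S.card := hS.card_pos
  have e1 : ∑ b ∈ N, (d b : ℝ) = (k : ℝ) * S.card := by
    rw [← Nat.cast_sum, hsumN]; push_cast; ring
  have e2 : ∑ b ∈ N, (d b : ℝ) ^ 2 =
      (S.card : ℝ) * ((k : ℝ) + (lam : ℝ) * ((S.card : ℝ) - 1)) := by
    have : ((∑ b ∈ N, d b ^ 2 : ℕ) : ℝ) = ∑ b ∈ N, (d b : ℝ) ^ 2 := by push_cast; rfl
    rw [← this, hsqN]
    push_cast [Nat.cast_sub hc1]
    ring
  rw [e1, e2] at cs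
  have hc : (0:ℝ) < S.card := by exact_mod_cast hS.card_pos
  have hD : (0:ℝ) < (k : ℝ) + (lam : ℝ) * ((S.card : ℝ) - 1) := by
    have h1 : (1:ℝ) ≤ S.card := by exact_mod_cast hc1
    have : (0:ℝ) < (k:ℝ) := by exact_mod_cast hk
    nlinarith [mul_nonneg (Nat.cast_nonneg (α := ℝ) lam) (sub_nonneg.mpr h1)]
  rw [div_le_div_iff₀ hD hc]
  nlinarith [cs, hc, hD]
end

section
/- Let n ≥ 2 be an integer and q a prime power, and let k = (qⁿ-1)/(q-1), μ = q^((n-1)/2) (as a real number). If (k² - kμ + 2μ²)/(μ(k-μ)²) < q, then (k-μ)(k²+μ²)/(k³+μ³) > 1 - q^((n+1)/2)(q-1)/(q^(n+1)-1). -/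
/-- For integers n ≥ 2, q ≥ 2, with `k = (qⁿ-1)/(q-1)` and `μ = √(q^(n-1))`:
if `(k² - kμ + 2μ²)/(μ(k-μ)²) < q` then
`(k-μ)(k²+μ²)/(k³+μ³) > 1 - q^((n+1)/2)·(q-1)/(q^(n+1)-1)`. -/
theorem stmt9 (n q : ℕ) (hn : 2 ≤ n) (hq : 2 ≤ q)
    (k μ : ℝ) (hk : k = ((q : ℝ)^n - 1) / ((q : ℝ) - 1))
    (hμ : μ = Real.sqrt ((q : ℝ)^(n - 1)))
    (h : (k^2 - k * μ + 2 * μ^2) / (μ * (k - μ)^2) < q) :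
    1 - Real.sqrt ((q : ℝ)^(n + 1)) * ((q : ℝ) - 1) / ((q : ℝ)^(n + 1) - 1) <
      (k - μ) * (k^2 + μ^2) / (k^3 + μ^3) := by
  have hQ : (2:ℝ) ≤ (q:ℝ) := by exact_mod_cast hq
  have hQ0 : (0:ℝ) < (q:ℝ) := by linarith
  have hμsq : μ^2 = (q:ℝ)^(n-1) := by
    rw [hμ]; exact Real.sq_sqrt (by positivity)
  have hμpos : 0 < μ := by
    rw [hμ]; exact Real.sqrt_pos.mpr (by positivity)
  have hμ1 : 1 < μ := by
    have h2 : (2:ℝ) ≤ (q:ℝ)^(n-1) := by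
      calc (2:ℝ) ≤ (q:ℝ) := hQ
        _ = (q:ℝ)^1 := (pow_one _).symm
        _ ≤ (q:ℝ)^(n-1) := pow_le_pow_right₀ (by linarith) (by omega)
    nlinarith [hμsq, hμpos]
  have hqq : (q:ℝ) * (q:ℝ)^(n-1) = (q:ℝ)^n := by
    rw [← pow_succ']; congr 1; omega
  have hkq : k * ((q:ℝ) - 1) = (q:ℝ) * μ^2 - 1 := by
    rw [hk, div_mul_cancel₀ _ (by linarith : (q:ℝ) - 1 ≠ 0), hμsq, hqq]
  have hkμ : μ < k := by
    nlinarith [mul_pos (sub_pos.mpr hμ1) (show (0:ℝ) < (q:ℝ)*μ+1 by positivity)]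
  have hkpos : 0 < k := lt_trans hμpos hkμ
  have hs : Real.sqrt ((q:ℝ)^(n+1)) = (q:ℝ) * μ := by
    have e : (q:ℝ)^(n+1) = ((q:ℝ))^2 * (q:ℝ)^(n-1) := by
      rw [← pow_add]; congr 1; omega
    rw [e, Real.sqrt_mul (by positivity), Real.sqrt_sq hQ0.le, hμ]
  have hpow : (q:ℝ)^(n+1) = (q:ℝ)^2 * μ^2 := by
    rw [hμsq, ← pow_add]; congr 1; omega
  have hden : (q:ℝ)^(n+1) - 1 = ((q:ℝ) - 1) * ((q:ℝ)*k + 1) := by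
    rw [hpow]; linear_combination (-(q:ℝ)) * hkq
  have hN : k^2 - k*μ + 2*μ^2 < (q:ℝ) * (μ * (k-μ)^2) := by
    rw [div_lt_iff₀ (mul_pos hμpos (pow_pos (sub_pos.mpr hkμ) 2))] at h
    linarith
  rw [hs, hden]
  have hd1 : (0:ℝ) < (q:ℝ)*k + 1 := by positivity
  have hd2 : (0:ℝ) < k^3 + μ^3 := by positivity
  have e1 : (q:ℝ) * μ * ((q:ℝ) - 1) / (((q:ℝ) - 1) * ((q:ℝ)*k + 1))
      = (q:ℝ) * μ / ((q:ℝ)*k + 1) := by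
    rw [mul_comm ((q:ℝ) * μ) ((q:ℝ) - 1),
      mul_div_mul_left _ _ (by linarith : (q:ℝ) - 1 ≠ 0)]
  rw [e1, show (1:ℝ) - (q:ℝ)*μ/((q:ℝ)*k+1) = ((q:ℝ)*k + 1 - (q:ℝ)*μ)/((q:ℝ)*k+1) by
    field_simp, div_lt_div_iff₀ hd1 hd2]
  nlinarith [mul_lt_mul_of_pos_left hN hμpos]
end

section
/- Let p be a prime and x, y, a, b, c be integers with x² + y² ≤ p^(3/2)/(2π) and |c - p/2| < p/2 - (p^(3/4)/√(2π))·√(a²+b²). Then 0 < ax + by + c < p. -/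
open Real in
/-- For a prime p and integers x, y, a, b, c with `x² + y² ≤ p^(3/2)/(2π)` and
`|c - p/2| < p/2 - (p^(3/4)/√(2π))·√(a²+b²)`, one has `0 < ax + by + c < p`. -/
theorem stmt11 (p : ℕ) (hp : p.Prime) (x y a b c : ℤ)
    (h1 : (x : ℝ)^2 + (y : ℝ)^2 ≤ (p : ℝ) * Real.sqrt p / (2 * π))
    (h2 : |(c : ℝ) - p / 2| <
      (p : ℝ) / 2 - ((p : ℝ) ^ ((3 : ℝ) / 4) / Real.sqrt (2 * π)) *
        Real.sqrt ((a : ℝ)^2 + (b : ℝ)^2)) :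
    0 < (a : ℝ) * x + (b : ℝ) * y + c ∧ (a : ℝ) * x + (b : ℝ) * y + c < p := by
  have hp0 : (0:ℝ) < p := by exact_mod_cast hp.pos
  set K : ℝ := (p : ℝ) ^ ((3 : ℝ) / 4) / Real.sqrt (2 * π) with hKdef
  have hpi : (0:ℝ) < 2 * π := by positivity
  have hK0 : (0:ℝ) ≤ K := by positivity
  have hKsq : K ^ 2 = (p : ℝ) * Real.sqrt p / (2 * π) := by
    rw [hKdef, div_pow, Real.sq_sqrt (le_of_lt hpi)]
    congr 1
    rw [← Real.rpow_natCast ((p:ℝ) ^ ((3:ℝ)/4)) 2, ← Real.rpow_mul hp0.le]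
    have h34 : ((3:ℝ)/4) * (2:ℕ) = 1 + 1/2 := by push_cast; ring
    rw [h34, Real.rpow_add hp0, Real.rpow_one, Real.sqrt_eq_rpow]
  set S : ℝ := Real.sqrt ((a : ℝ)^2 + (b : ℝ)^2) with hSdef
  have hS0 : 0 ≤ S := Real.sqrt_nonneg _
  have hT : Real.sqrt ((x:ℝ)^2 + (y:ℝ)^2) ≤ K := by
    calc Real.sqrt ((x:ℝ)^2 + (y:ℝ)^2) ≤ Real.sqrt ((p : ℝ) * Real.sqrt p / (2 * π)) :=
          Real.sqrt_le_sqrt h1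
      _ = K := by rw [← hKsq, Real.sqrt_sq hK0]
  have hCS : |(a:ℝ)*x + (b:ℝ)*y| ≤ S * Real.sqrt ((x:ℝ)^2 + (y:ℝ)^2) := by
    rw [hSdef, ← Real.sqrt_mul (by positivity), ← Real.sqrt_sq_eq_abs]
    apply Real.sqrt_le_sqrt
    nlinarith [sq_nonneg ((a:ℝ)*y - (b:ℝ)*x)]
  have hCS2 : |(a:ℝ)*x + (b:ℝ)*y| ≤ S * K :=
    hCS.trans (mul_le_mul_of_nonneg_left hT hS0)
  obtain ⟨h2a, h2b⟩ := abs_lt.mp h2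
  obtain ⟨ha1, ha2⟩ := abs_le.mp hCS2
  constructor <;> nlinarith
end

section
/- Let q be a prime power, x a positive integer and m = ⌊x/(q+1)⌋ + 1. If ((x+1)/(m+1))·(2(q+1) - x/m) > q(q+1) - x, then the incidence-free number of the point-line incidence graph of PG(2,q) is at most x. -/
/-- Lemma 4.1: let q be a prime power and let `R` be the point-line incidence
relation of the projective plane PG(2,q) (a (q²+q+1, q+1, 1)-graph). Let x be a
positive integer and `m = ⌊x/(q+1)⌋ + 1`. If
`((x+1)/(m+1))·(2(q+1) - x/m) > q(q+1) - x`, then the incidence-free number is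
at most x: every incidence-free pair (S,T) with |S| = |T| satisfies |S| ≤ x. -/
theorem stmt13 {P L : Type*} [Fintype P] [Fintype L]
    (R : P → L → Prop) [∀ a b, Decidable (R a b)]
    (q : ℕ) (hq : ∃ (p e : ℕ), p.Prime ∧ 0 < e ∧ q = p ^ e)
    (hcardP : Fintype.card P = q^2 + q + 1)
    (hcardL : Fintype.card L = q^2 + q + 1)
    (hdegP : ∀ a : P, (Finset.univ.filter (fun b : L => R a b)).card = q + 1)
    (hdegL : ∀ b : L, (Finset.univ.filter (fun a : P => R a b)).card = q + 1)
    (hlamP : ∀ a a' : P, a ≠ a' →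
      (Finset.univ.filter (fun b : L => R a b ∧ R a' b)).card = 1)
    (hlamL : ∀ b b' : L, b ≠ b' →
      (Finset.univ.filter (fun a : P => R a b ∧ R a b')).card = 1)
    (x : ℕ) (hx : 0 < x) (m : ℕ) (hm : m = x / (q + 1) + 1)
    (hineq : ((x : ℚ) + 1) / (m + 1) * (2 * (q + 1) - (x : ℚ) / m) >
      q * (q + 1) - x) :
    ∀ (S : Finset P) (T : Finset L), S.card = T.card →
      (∀ a ∈ S, ∀ b ∈ T, ¬ R a b) → S.card ≤ x := by
  classical
  intro S T hST hfree
  by_contra hle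
  push_neg at hle
  obtain ⟨S', hS'sub, hS'card⟩ := Finset.exists_subset_card_eq (show x + 1 ≤ S.card by omega)
  obtain ⟨T', hT'sub, hT'card⟩ := Finset.exists_subset_card_eq (show x + 1 ≤ T.card by omega)
  set d : L → ℕ := fun b => (S'.filter (fun a => R a b)).card with hd
  have hdb : ∀ b : L, d b = ∑ a ∈ S', if R a b then 1 else 0 := fun b => Finset.card_filter _ _
  have hsum1 : ∑ b : L, d b = (x + 1) * (q + 1) := by
    calc ∑ b : L, d b = ∑ b : L, ∑ a ∈ S', if R a b then 1 else 0 :=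
          Finset.sum_congr rfl fun b _ => hdb b
      _ = ∑ a ∈ S', ∑ b : L, if R a b then 1 else 0 := Finset.sum_comm
      _ = ∑ a ∈ S', (q + 1) := by
          refine Finset.sum_congr rfl fun a _ => ?_
          rw [← Finset.card_filter]; exact hdegP a
      _ = (x + 1) * (q + 1) := by rw [Finset.sum_const, hS'card, smul_eq_mul]
  have hpair : ∀ a ∈ S', ∀ a' ∈ S',
      (Finset.univ.filter (fun b : L => R a b ∧ R a' b)).card = if a' = a then q + 1 else 1 := by
    intro a _ a' _
    by_cases h : a' = a
    · subst h; rw [if_pos rfl]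
      simpa [and_self] using hdegP a'
    · rw [if_neg h]; exact hlamP a a' (fun hh => h hh.symm)
  have hsum2 : ∑ b : L, d b * d b = (x + 1) * (q + 1 + x) := by
    calc ∑ b : L, d b * d b
        = ∑ b : L, ∑ a ∈ S', ∑ a' ∈ S', (if R a b then 1 else 0) * (if R a' b then 1 else 0) := by
          refine Finset.sum_congr rfl fun b _ => ?_
          rw [hdb b, Finset.sum_mul_sum]
      _ = ∑ a ∈ S', ∑ b : L, ∑ a' ∈ S', (if R a b then 1 else 0) * (if R a' b then 1 else 0) :=
          Finset.sum_comm
      _ = ∑ a ∈ S', ∑ a' ∈ S', ∑ b : L, (if R a b then 1 else 0) * (if R a' b then 1 else 0) :=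
          Finset.sum_congr rfl fun a _ => Finset.sum_comm
      _ = ∑ a ∈ S', ∑ a' ∈ S', (Finset.univ.filter (fun b : L => R a b ∧ R a' b)).card := by
          refine Finset.sum_congr rfl fun a _ => Finset.sum_congr rfl fun a' _ => ?_
          rw [Finset.card_filter]
          refine Finset.sum_congr rfl fun b _ => ?_
          by_cases h1 : R a b <;> by_cases h2 : R a' b <;> simp [h1, h2]
      _ = ∑ a ∈ S', ∑ a' ∈ S', (if a' = a then q + 1 else 1) := by
          refine Finset.sum_congr rfl fun a ha => Finset.sum_congr rfl fun a' ha' => ?_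
          exact hpair a ha a' ha'
      _ = ∑ a ∈ S', (q + 1 + x) := by
          refine Finset.sum_congr rfl fun a ha => ?_
          have : ∀ a' ∈ S', (if a' = a then q + 1 else 1) = (if a' = a then q else 0) + 1 := by
            intro a' _; by_cases h : a' = a <;> simp [h]
          rw [Finset.sum_congr rfl this, Finset.sum_add_distrib, Finset.sum_ite_eq' S' a,
            if_pos ha, Finset.sum_const, hS'card, smul_eq_mul, mul_one]
          omega
      _ = (x + 1) * (q + 1 + x) := by rw [Finset.sum_const, hS'card, smul_eq_mul]
  -- lines in T' have no points of S'
  have hT0 : ∀ b ∈ T', d b = 0 := by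
    intro b hb
    rw [hd]
    simp only [Finset.card_eq_zero, Finset.filter_eq_empty_iff]
    exact fun a ha => hfree a (hS'sub ha) b (hT'sub hb)
  set N : ℕ := (Finset.univ.filter fun b : L => 0 < d b).card with hN
  have hdisj : Disjoint (Finset.univ.filter fun b : L => 0 < d b) T' := by
    rw [Finset.disjoint_left]
    intro b hb hbT
    rw [Finset.mem_filter] at hb
    have := hT0 b hbT
    omega
  have hNbound : N + (x + 1) ≤ q ^ 2 + q + 1 := by
    have h1 := Finset.card_union_of_disjoint hdisj
    have h2 := Finset.card_le_univ ((Finset.univ.filter fun b : L => 0 < d b) ∪ T')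
    rw [h1, hT'card, hcardL] at h2
    exact h2
  -- rational inequalities
  have key : ∀ b : L, ((2 * m + 1 : ℚ)) * d b - (d b : ℚ) ^ 2 ≤
      (m : ℚ) * (m + 1) * (if 0 < d b then 1 else 0) := by
    intro b
    rcases Nat.eq_zero_or_pos (d b) with h0 | h1
    · simp [h0]
    · rw [if_pos h1]
      rcases le_or_gt (d b) m with h | h
      · have h' : (d b : ℚ) ≤ m := by exact_mod_cast h
        have h1' : (1 : ℚ) ≤ d b := by exact_mod_cast h1
        nlinarith
      · have h' : (m : ℚ) + 1 ≤ d b := by exact_mod_cast h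
        nlinarith
  have e1 : ∑ b : L, (d b : ℚ) = ((x : ℚ) + 1) * ((q : ℚ) + 1) := by
    rw [← Nat.cast_sum, hsum1]; push_cast; ring
  have e2 : ∑ b : L, (d b : ℚ) ^ 2 = ((x : ℚ) + 1) * ((q : ℚ) + 1 + x) := by
    have : ∀ b : L, (d b : ℚ) ^ 2 = ((d b * d b : ℕ) : ℚ) := by
      intro b; push_cast; ring
    rw [Finset.sum_congr rfl fun b _ => this b, ← Nat.cast_sum, hsum2]; push_cast; ring
  have e3 : ∑ b : L, (if 0 < d b then (1 : ℚ) else 0) = (N : ℚ) := by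
    rw [Finset.sum_boole, hN]
  have hsumQ : (2 * (m : ℚ) + 1) * (((x : ℚ) + 1) * ((q : ℚ) + 1)) -
      ((x : ℚ) + 1) * ((q : ℚ) + 1 + x) ≤ (m : ℚ) * (m + 1) * N := by
    have h1 : ∑ b : L, (((2 * m + 1 : ℚ)) * d b - (d b : ℚ) ^ 2) ≤
        ∑ b : L, (m : ℚ) * (m + 1) * (if 0 < d b then 1 else 0) :=
      Finset.sum_le_sum fun b _ => key b
    rw [Finset.sum_sub_distrib, ← Finset.mul_sum, ← Finset.mul_sum, e1, e2, e3] at h1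
    exact h1
  have hm1 : (1 : ℚ) ≤ m := by
    have : 1 ≤ m := by rw [hm]; exact Nat.le_add_left 1 _
    exact_mod_cast this
  have hNQ : (N : ℚ) + ((x : ℚ) + 1) ≤ (q : ℚ) ^ 2 + q + 1 := by exact_mod_cast hNbound
  have hmpos : (0 : ℚ) < m := by linarith
  have hmpos1 : (0 : ℚ) < (m : ℚ) + 1 := by linarith
  have hineq' : ((x : ℚ) + 1) * (2 * ((q : ℚ) + 1) * m - x) >
      ((q : ℚ) * (q + 1) - x) * (((m : ℚ) + 1) * m) := by
    have h2 : ((x : ℚ) + 1) / (m + 1) * (2 * (q + 1) - (x : ℚ) / m) * (((m : ℚ) + 1) * m) >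
        ((q : ℚ) * (q + 1) - x) * (((m : ℚ) + 1) * m) :=
      mul_lt_mul_of_pos_right hineq (by positivity)
    have h3 : ((x : ℚ) + 1) / (m + 1) * (2 * (q + 1) - (x : ℚ) / m) * (((m : ℚ) + 1) * m) =
        ((x : ℚ) + 1) * (2 * ((q : ℚ) + 1) * m - x) := by
      field_simp
    rwa [h3] at h2
  have hprod : (m : ℚ) * (m + 1) * N ≤ (m : ℚ) * (m + 1) * ((q : ℚ) ^ 2 + q - x) := by
    apply mul_le_mul_of_nonneg_left (by linarith) (by positivity)
  nlinarith [hsumQ, hprod, hineq']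
end

section
/- In the Fano plane PG(2,2) (incidence graph Γ with 7 points and 7 lines), every nonempty subset X of the 14 vertices with |X| ≤ 7 satisfies |N(X)| ≥ (5/7)|X|; i.e., i_V(Γ_{2,2}) ≥ 5/7. -/
open Finset


lemma count_key {V : Type*} [Fintype V] [DecidableEq V]
    (G : SimpleGraph V) [DecidableRel G.Adj] (A : Finset V)
    (hdeg : ∀ u ∈ A, (G.neighborFinset u).card = 3)
    (hlam : ∀ u ∈ A, ∀ w ∈ A, u ≠ w →
      (G.neighborFinset u ∩ G.neighborFinset w).card = 1) :
    7 * A.card ≤ A.card * A.card + 2 * (A.biUnion (fun u => G.neighborFinset u)).card := by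
  classical
  set N := A.biUnion (fun u => G.neighborFinset u) with hN
  have hsub : ∀ u ∈ A, G.neighborFinset u ⊆ N := fun u hu => subset_biUnion_of_mem (fun u => G.neighborFinset u) hu
  have hfilt : ∀ u ∈ A, N.filter (fun l => G.Adj u l) = G.neighborFinset u := by
    intro u hu
    ext w
    simp only [mem_filter, SimpleGraph.mem_neighborFinset]
    exact ⟨fun h => h.2, fun h => ⟨hsub u hu (by simpa [SimpleGraph.mem_neighborFinset] using h), h⟩⟩
  have hS1 : ∑ l ∈ N, (A.filter (fun u => G.Adj u l)).card = 3 * A.card := by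
    have e1 : ∀ l ∈ N, (A.filter (fun u => G.Adj u l)).card
        = ∑ u ∈ A, if G.Adj u l then 1 else 0 := by
      intro l _; rw [Finset.card_filter]
    rw [Finset.sum_congr rfl e1, Finset.sum_comm]
    have e2 : ∀ u ∈ A, (∑ l ∈ N, if G.Adj u l then 1 else 0) = 3 := by
      intro u hu
      rw [← Finset.card_filter, hfilt u hu, hdeg u hu]
    rw [Finset.sum_congr rfl e2, Finset.sum_const, smul_eq_mul, mul_comm]
  have hS2 : ∑ l ∈ N, (A.filter (fun u => G.Adj u l)).card * (A.filter (fun u => G.Adj u l)).card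
      = A.card * A.card + 2 * A.card := by
    have e1 : ∀ l ∈ N, (A.filter (fun u => G.Adj u l)).card * (A.filter (fun u => G.Adj u l)).card
        = ∑ u ∈ A, ∑ w ∈ A, if G.Adj u l ∧ G.Adj w l then 1 else 0 := by
      intro l _
      rw [Finset.card_filter, Finset.sum_mul_sum]
      refine Finset.sum_congr rfl fun u _ => Finset.sum_congr rfl fun w _ => ?_
      by_cases h1 : G.Adj u l <;> by_cases h2 : G.Adj w l <;> simp [h1, h2]
    rw [Finset.sum_congr rfl e1, Finset.sum_comm]
    have e2 : ∀ u ∈ A, (∑ l ∈ N, ∑ w ∈ A, if G.Adj u l ∧ G.Adj w l then 1 else 0)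
        = A.card + 2 := by
      intro u hu
      rw [Finset.sum_comm]
      have e3 : ∀ w ∈ A, (∑ l ∈ N, if G.Adj u l ∧ G.Adj w l then 1 else 0)
          = (G.neighborFinset u ∩ G.neighborFinset w).card := by
        intro w hw
        rw [← Finset.card_filter]
        congr 1
        ext l
        simp only [mem_filter, mem_inter, SimpleGraph.mem_neighborFinset]
        exact ⟨fun h => h.2, fun h => ⟨hsub u hu (by simpa [SimpleGraph.mem_neighborFinset] using h.1), h⟩⟩
      rw [Finset.sum_congr rfl e3]
      rw [← Finset.add_sum_erase _ _ hu]
      have : ∑ w ∈ A.erase u, (G.neighborFinset u ∩ G.neighborFinset w).card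
          = A.card - 1 := by
        rw [Finset.sum_congr rfl fun w hw => hlam u hu w (Finset.mem_of_mem_erase hw)
          (fun h => (Finset.mem_erase.mp hw).1 h.symm)]
        rw [Finset.sum_const, smul_eq_mul, mul_one, Finset.card_erase_of_mem hu]
      rw [this, Finset.inter_self, hdeg u hu]
      have h1 : 1 ≤ A.card := Finset.card_pos.mpr ⟨u, hu⟩
      omega
    rw [Finset.sum_congr rfl e2, Finset.sum_const, smul_eq_mul]
    ring_nf
  -- pointwise: 3k ≤ k*k + 2
  have hpt : ∀ l ∈ N, 3 * (A.filter (fun u => G.Adj u l)).card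
      ≤ (A.filter (fun u => G.Adj u l)).card * (A.filter (fun u => G.Adj u l)).card + 2 := by
    intro l _
    set k := (A.filter (fun u => G.Adj u l)).card
    rcases le_or_gt k 2 with h | h
    · interval_cases k <;> norm_num
    · calc 3 * k ≤ k * k := Nat.mul_le_mul_right k h
        _ ≤ k * k + 2 := Nat.le_add_right _ _
  have := Finset.sum_le_sum hpt
  rw [← Finset.mul_sum, hS1, Finset.sum_add_distrib, hS2, Finset.sum_const, smul_eq_mul] at this
  nlinarith [this]

lemma cover_key {V : Type*} [Fintype V] [DecidableEq V]
    (G : SimpleGraph V) [DecidableRel G.Adj] (A P L : Finset V)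
    (hAP : A ⊆ P) (hA5 : 5 ≤ A.card) (hP : P.card = 7)
    (hNL : ∀ l ∈ L, G.neighborFinset l ⊆ P)
    (hdeg : ∀ l ∈ L, (G.neighborFinset l).card = 3) :
    L ⊆ A.biUnion (fun u => G.neighborFinset u) := by
  intro l hl
  have hne : (G.neighborFinset l ∩ A).Nonempty := by
    by_contra h
    rw [not_nonempty_iff_eq_empty] at h
    have hsub : G.neighborFinset l ⊆ P \ A := by
      intro w hw
      rw [mem_sdiff]
      refine ⟨hNL l hl hw, fun hwA => ?_⟩
      exact absurd (mem_inter.mpr ⟨hw, hwA⟩) (by simp [h])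
    have := Finset.card_le_card hsub
    rw [hdeg l hl, Finset.card_sdiff_of_subset hAP, hP] at this
    omega
  obtain ⟨u, hu⟩ := hne
  rw [mem_inter, SimpleGraph.mem_neighborFinset] at hu
  exact mem_biUnion.mpr ⟨u, hu.2, by rw [SimpleGraph.mem_neighborFinset]; exact hu.1.symm⟩

lemma arith_key (a b na nb y : ℕ) (h1 : 7*a ≤ a*a + 2*na) (h2 : 7*b ≤ b*b + 2*nb)
    (h3 : 5 ≤ a → 7 ≤ na) (h4 : 5 ≤ b → 7 ≤ nb) (h5 : a + b ≤ 7) (h6 : 1 ≤ a + b)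
    (h7 : na - b + (nb - a) ≤ y) : 5 * (a + b) ≤ 7 * y := by
  rcases le_or_gt 5 a with ha | ha
  · have := h3 ha; clear h1 h2 h3 h4; omega
  rcases le_or_gt 5 b with hb | hb
  · have := h4 hb; clear h1 h2 h3 h4; omega
  clear h3 h4
  interval_cases a <;> interval_cases b <;> omega


/-- The Fano plane incidence graph Γ_{2,2}: 7 points, 7 lines, each point on 3
lines, each line containing 3 points, any two distinct points on exactly one
common line and any two distinct lines meeting in exactly one point. Every
nonempty subset X of the 14 vertices with |X| ≤ 7 satisfies
|N(X)| ≥ (5/7)|X|, i.e. `i_V(Γ_{2,2}) ≥ 5/7`. -/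
theorem stmt17 {V : Type*} [Fintype V] [DecidableEq V]
    (G : SimpleGraph V) [DecidableRel G.Adj]
    (P L : Finset V) (hunion : P ∪ L = Finset.univ) (hdisj : Disjoint P L)
    (hP : P.card = 7) (hL : L.card = 7)
    (hbip : ∀ u w : V, G.Adj u w → (u ∈ P ∧ w ∈ L) ∨ (u ∈ L ∧ w ∈ P))
    (hdeg : ∀ u : V, G.degree u = 3)
    (hlam : ∀ u w : V, u ≠ w →
      ((u ∈ P ∧ w ∈ P) ∨ (u ∈ L ∧ w ∈ L)) →
      (G.neighborFinset u ∩ G.neighborFinset w).card = 1) :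
    ∀ X : Finset V, X.Nonempty → X.card ≤ 7 →
      (5 : ℝ) / 7 * X.card ≤ (((X.biUnion (fun u => G.neighborFinset u)) \ X).card : ℝ) := by
  intro X hXne hX7
  classical
  have hdc : ∀ u : V, (G.neighborFinset u).card = 3 := fun u => by
    rw [SimpleGraph.card_neighborFinset_eq_degree]; exact hdeg u
  set A := X ∩ P with hA
  set B := X ∩ L with hB
  have hAP : A ⊆ P := inter_subset_right
  have hBL : B ⊆ L := inter_subset_right
  have hAX : A ⊆ X := inter_subset_left
  have hBX : B ⊆ X := inter_subset_left
  have hXAB : X = A ∪ B := by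
    rw [hA, hB, ← inter_union_distrib_left, hunion, inter_univ]
  have hABdisj : Disjoint A B := hdisj.mono hAP hBL
  have hcard : A.card + B.card = X.card := by
    rw [hXAB, card_union_of_disjoint hABdisj]
  have hNP : ∀ u ∈ P, G.neighborFinset u ⊆ L := by
    intro u hu w hw
    rw [SimpleGraph.mem_neighborFinset] at hw
    rcases hbip u w hw with ⟨_, h⟩ | ⟨h, _⟩
    · exact h
    · exact absurd hu (Finset.disjoint_right.mp hdisj h)
  have hNL : ∀ u ∈ L, G.neighborFinset u ⊆ P := by
    intro u hu w hw
    rw [SimpleGraph.mem_neighborFinset] at hw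
    rcases hbip u w hw with ⟨h, _⟩ | ⟨_, h⟩
    · exact absurd hu (Finset.disjoint_left.mp hdisj h)
    · exact h
  set NA := A.biUnion (fun u => G.neighborFinset u) with hNA
  set NB := B.biUnion (fun u => G.neighborFinset u) with hNB
  have hNAL : NA ⊆ L := biUnion_subset.2 fun u hu => hNP u (hAP hu)
  have hNBP : NB ⊆ P := biUnion_subset.2 fun u hu => hNL u (hBL hu)
  set Y := (X.biUnion (fun u => G.neighborFinset u)) \ X with hY
  have h1 : NA \ B ⊆ Y := by
    intro l hl
    rw [mem_sdiff] at hl ⊢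
    refine ⟨biUnion_subset_biUnion_of_subset_left _ hAX hl.1, fun hlX => ?_⟩
    have hlL : l ∈ L := hNAL hl.1
    rcases mem_union.mp (hXAB ▸ hlX) with h | h
    · exact absurd hlL (Finset.disjoint_left.mp hdisj (hAP h))
    · exact hl.2 h
  have h2 : NB \ A ⊆ Y := by
    intro p hp
    rw [mem_sdiff] at hp ⊢
    refine ⟨biUnion_subset_biUnion_of_subset_left _ hBX hp.1, fun hpX => ?_⟩
    have hpP : p ∈ P := hNBP hp.1
    rcases mem_union.mp (hXAB ▸ hpX) with h | h
    · exact hp.2 h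
    · exact absurd hpP (Finset.disjoint_right.mp hdisj (hBL h))
  have hdisjY : Disjoint (NA \ B) (NB \ A) :=
    (hdisj.symm.mono (sdiff_subset.trans hNAL) (sdiff_subset.trans hNBP))
  have hYge : (NA \ B).card + (NB \ A).card ≤ Y.card := by
    rw [← card_union_of_disjoint hdisjY]
    exact card_le_card (union_subset h1 h2)
  have hna : NA.card - B.card ≤ (NA \ B).card := by
    have := Finset.card_le_card_sdiff_add_card (s := NA) (t := B)
    omega
  have hnb : NB.card - A.card ≤ (NB \ A).card := by
    have := Finset.card_le_card_sdiff_add_card (s := NB) (t := A)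
    omega
  -- double counting
  have key1 : 7 * A.card ≤ A.card * A.card + 2 * NA.card :=
    count_key G A (fun u _ => hdc u)
      (fun u hu w hw hne => hlam u w hne (Or.inl ⟨hAP hu, hAP hw⟩))
  have key2 : 7 * B.card ≤ B.card * B.card + 2 * NB.card :=
    count_key G B (fun u _ => hdc u)
      (fun u hu w hw hne => hlam u w hne (Or.inr ⟨hBL hu, hBL hw⟩))
  have cov1 : 5 ≤ A.card → 7 ≤ NA.card := fun h5 => by
    have h := Finset.card_le_card (cover_key G A P L hAP h5 hP hNL (fun l _ => hdc l))
    rw [← hNA, hL] at h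
    exact h
  have cov2 : 5 ≤ B.card → 7 ≤ NB.card := fun h5 => by
    have h := Finset.card_le_card (cover_key G B L P hBL h5 hL hNP (fun l _ => hdc l))
    rw [← hNB, hP] at h
    exact h
  have hsum7 : A.card + B.card ≤ 7 := hcard ▸ hX7
  have hsum1 : 1 ≤ A.card + B.card := hcard ▸ Finset.card_pos.mpr hXne
  have main : 5 * X.card ≤ 7 * Y.card := by
    rw [← hcard]
    exact arith_key A.card B.card NA.card NB.card Y.card key1 key2 cov1 cov2 hsum7 hsum1
      (le_trans (Nat.add_le_add hna hnb) hYge)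
  have : (5 : ℝ) * X.card ≤ 7 * Y.card := by exact_mod_cast main
  rw [div_mul_eq_mul_div, div_le_iff₀ (by norm_num : (0:ℝ) < 7)]
  linarith
end

section
/- Let Γ be a (v,k,λ)-graph with k > λ and let f(x) = k²x/(k+λ(x-1)) + x. Then for any nonempty X ⊆ V(Γ), |N(X)| ≥ f(|X| - f⁻¹(|X|)) - |X|. -/
/-!
Split `X` into `A = X ∩ V1` and `B = X ∩ V2`, and let `g = neighborBound k λ`, that is
`g x = k²x / (k + λ(x - 1))`, so that `f = g + id`. Cauchy–Schwarz applied to the number of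
neighbours in `A` of the vertices of `N(A)` gives `|N(A)| ≥ g |A|`; as `N(A) ⊆ V2` meets `X` only
inside `B`, the vertex boundary of `X` has at least `(g a - b)⁺ + (g b - a)⁺` elements, where
`a = |A|`, `b = |B|`. With `f z = a + b` the claim is `g (a + b - z) - z ≤ (g a - b)⁺ + (g b - a)⁺`.
This follows from the monotonicity of `g`, from `x ≤ g x` for `x ≤ |V1|` (which amounts to
`λ(|V1| - 1) ≤ k(k - 1)`), and from the exchange inequality `g z + g (a + b - z) ≤ g a + g b`
for `z ≤ min a b`, a form of the concavity of `g`.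
-/

open Finset

noncomputable def neighborBound (k lam x : ℝ) : ℝ := k ^ 2 * x / (k + lam * (x - 1))

section NeighborBound

variable {k lam : ℝ}

lemma neighborBound_denom_pos (hlam : 0 ≤ lam) (hlk : lam < k) {x : ℝ} (hx : 0 ≤ x) :
    0 < k + lam * (x - 1) := by
  nlinarith

lemma monotoneOn_neighborBound (hlam : 0 ≤ lam) (hlk : lam < k) :
    MonotoneOn (neighborBound k lam) (Set.Ici 0) := by
  intro x hx y hy hxy
  rw [neighborBound, neighborBound, div_le_div_iff₀ (neighborBound_denom_pos hlam hlk hx)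
    (neighborBound_denom_pos hlam hlk hy)]
  nlinarith [mul_nonneg (mul_nonneg (sq_nonneg k) (sub_nonneg.2 hlk.le)) (sub_nonneg.2 hxy)]

lemma neighborBound_add_neighborBound_le (hlam : 0 ≤ lam) (hlk : lam < k) {a b z : ℝ}
    (hz : 0 ≤ z) (hza : z ≤ a) (hzb : z ≤ b) :
    neighborBound k lam z + neighborBound k lam (a + b - z) ≤
      neighborBound k lam a + neighborBound k lam b := by
  set D : ℝ → ℝ := fun x => k + lam * (x - 1) with hD
  have hpos : ∀ x, 0 ≤ x → 0 < D x := fun x hx => neighborBound_denom_pos hlam hlk hx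
  -- Both differences `g (a + b - z) - g a` and `g b - g z` have the gap `b - z`; the first has
  -- the larger denominator.
  have hdiff : ∀ x y, 0 ≤ x → 0 ≤ y →
      neighborBound k lam y - neighborBound k lam x =
        k ^ 2 * (k - lam) * (y - x) / (D y * D x) := by
    intro x y hx hy
    rw [neighborBound, neighborBound, div_sub_div _ _ (hpos y hy).ne' (hpos x hx).ne']
    ring
  have hs : 0 ≤ a + b - z := by linarith
  have hright := hdiff a (a + b - z) (hz.trans hza) hs
  rw [show a + b - z - a = b - z by ring] at hright
  have hleft := hdiff z b hz (hz.trans hzb)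
  have hden : D b * D z ≤ D (a + b - z) * D a := by
    simp only [hD]
    nlinarith [mul_nonneg hlam (sub_nonneg.2 hza), mul_nonneg hlam hlam,
      mul_nonneg (sub_nonneg.2 hza) (add_nonneg (hz.trans hza) (hz.trans hzb))]
  have : k ^ 2 * (k - lam) * (b - z) / (D (a + b - z) * D a) ≤
      k ^ 2 * (k - lam) * (b - z) / (D b * D z) :=
    div_le_div_of_nonneg_left
      (mul_nonneg (mul_nonneg (sq_nonneg k) (sub_nonneg.2 hlk.le)) (sub_nonneg.2 hzb))
      (mul_pos (hpos b (hz.trans hzb)) (hpos z hz)) hden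
  linarith

lemma le_neighborBound (hlam : 0 ≤ lam) (hlk : lam < k) {x : ℝ} (hx : 0 ≤ x)
    (hx' : lam * (x - 1) ≤ k * (k - 1)) : x ≤ neighborBound k lam x := by
  rw [neighborBound, le_div_iff₀ (neighborBound_denom_pos hlam hlk hx)]
  nlinarith [mul_le_mul_of_nonneg_left hx' hx]

lemma neighborBound_le_of_sq_le (hlam : 0 ≤ lam) (hlk : lam < k) {x n : ℝ} (hx : 0 ≤ x)
    (hn : 0 ≤ n) (h : (k * x) ^ 2 ≤ n * (k * x + lam * (x * x - x))) :
    neighborBound k lam x ≤ n := by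
  rcases hx.eq_or_lt with rfl | hx
  · simpa [neighborBound] using hn
  rw [neighborBound, div_le_iff₀ (neighborBound_denom_pos hlam hlk hx.le)]
  refine le_of_mul_le_mul_left ?_ hx
  linarith [show (k * x) ^ 2 = x * (k ^ 2 * x) by ring,
    show n * (k * x + lam * (x * x - x)) = x * (n * (k + lam * (x - 1))) by ring]

end NeighborBound

lemma apply_add_sub_sub_le_add {g : ℝ → ℝ} (hmono : MonotoneOn g (Set.Ici 0))
    (hexch : ∀ a b z, 0 ≤ z → z ≤ a → z ≤ b → g z + g (a + b - z) ≤ g a + g b)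
    {a b z na nb : ℝ} (ha : 0 ≤ a) (hb : 0 ≤ b) (hag : a ≤ g a) (hbg : b ≤ g b) (hz : 0 ≤ z)
    (hgz : g z + z = a + b) (hna : g a - b ≤ na) (hnb : g b - a ≤ nb) (hna0 : 0 ≤ na)
    (hnb0 : 0 ≤ nb) : g (a + b - z) - z ≤ na + nb := by
  rcases le_total z a with hza | haz <;> rcases le_total z b with hzb | hbz
  · linarith [hexch a b z hz hza hzb]
  · have : g (a + b - z) ≤ g a := hmono (Set.mem_Ici.2 (by linarith)) ha (by linarith)
    linarith
  · have : g (a + b - z) ≤ g b := hmono (Set.mem_Ici.2 (by linarith)) hb (by linarith)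
    linarith
  · -- `g z ≥ g a ≥ a` and `z ≥ b` leave no room in `g z + z = a + b` unless `z = b`.
    obtain rfl : z = b := by linarith [hag.trans (hmono ha hz haz)]
    rw [add_sub_cancel_right]
    linarith

namespace SimpleGraph

variable {V : Type*} [Fintype V] {G : SimpleGraph V} [DecidableRel G.Adj] {k : ℕ}

lemma IsRegularOfDegree.card_neighborFinset (hreg : G.IsRegularOfDegree k) (u : V) :
    #(G.neighborFinset u) = k :=
  (G.card_neighborFinset_eq_degree u).trans (hreg u)

lemma neighborFinset_subset_of_bipartite {V₁ V₂ : Finset V} (hdisj : Disjoint V₁ V₂)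
    (hbip : ∀ u w : V, G.Adj u w → (u ∈ V₁ ∧ w ∈ V₂) ∨ (u ∈ V₂ ∧ w ∈ V₁))
    {u : V} (hu : u ∈ V₁) : G.neighborFinset u ⊆ V₂ := by
  intro w hw
  rcases hbip u w ((G.mem_neighborFinset u w).1 hw) with h | h
  · exact h.2
  · exact absurd h.1 (Finset.disjoint_left.1 hdisj hu)

variable [DecidableEq V]

variable (G) in
def HasCodegreeOn (lam : ℕ) (P : Finset V) : Prop :=
  ∀ u ∈ P, ∀ w ∈ P, u ≠ w → #(G.neighborFinset u ∩ G.neighborFinset w) = lam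

variable {lam : ℕ} {P : Finset V}

lemma HasCodegreeOn.mul_card_sub_one_le (hP : G.HasCodegreeOn lam P)
    (hreg : G.IsRegularOfDegree k) {u : V} (hu : u ∈ P) : lam * (#P - 1) ≤ k * (k - 1) := by
  -- Count the paths `u - y - w` with `w ∈ P \ {u}`: every `w` has `λ` choices of `y`, and every
  -- `y ∈ N(u)` has at most `k - 1` choices of `w`.
  rw [← card_erase_of_mem hu, mul_comm lam]
  calc #(P.erase u) * lam ≤ #(G.neighborFinset u) * (k - 1) := by
        refine card_mul_le_card_mul (fun w y => G.Adj w y) (fun w hw => le_of_eq ?_)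
          (fun y hy => ?_)
        · rw [← hP u hu w (mem_of_mem_erase hw) (ne_of_mem_erase hw).symm]
          congr 1
          ext y
          simp [bipartiteAbove]
        · have hu' : u ∈ G.neighborFinset y :=
            (G.mem_neighborFinset _ _).2 (G.adj_symm ((G.mem_neighborFinset _ _).1 hy))
          rw [← hreg.card_neighborFinset y, ← card_erase_of_mem hu']
          refine card_le_card fun w hw => ?_
          simp only [bipartiteBelow, mem_filter, mem_erase] at hw ⊢
          exact ⟨hw.1.1, (G.mem_neighborFinset _ _).2 (G.adj_symm hw.2)⟩
    _ = k * (k - 1) := by rw [hreg.card_neighborFinset]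

lemma filter_adj_biUnion_neighborFinset {A : Finset V} {u : V} (hu : u ∈ A) :
    {y ∈ A.biUnion (fun u => G.neighborFinset u) | G.Adj u y} = G.neighborFinset u := by
  ext y
  simp only [mem_filter, mem_neighborFinset, mem_biUnion]
  exact ⟨And.right, fun h => ⟨⟨u, hu, h⟩, h⟩⟩

lemma sum_card_filter_adj (hreg : G.IsRegularOfDegree k) (A : Finset V) :
    ∑ y ∈ A.biUnion (fun u => G.neighborFinset u), #{u ∈ A | G.Adj u y} = k * #A := by
  calc ∑ y ∈ A.biUnion (fun u => G.neighborFinset u), #{u ∈ A | G.Adj u y}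
      = ∑ u ∈ A, #{y ∈ A.biUnion (fun u => G.neighborFinset u) | G.Adj u y} :=
        (sum_card_bipartiteAbove_eq_sum_card_bipartiteBelow G.Adj).symm
    _ = ∑ _u ∈ A, k := sum_congr rfl fun u hu => by
        rw [filter_adj_biUnion_neighborFinset hu, hreg.card_neighborFinset]
    _ = k * #A := by rw [sum_const, smul_eq_mul, mul_comm]

lemma HasCodegreeOn.sum_sq_card_filter_adj (hP : G.HasCodegreeOn lam P)
    (hreg : G.IsRegularOfDegree k) {A : Finset V} (hAP : A ⊆ P) :
    ∑ y ∈ A.biUnion (fun u => G.neighborFinset u), #{u ∈ A | G.Adj u y} ^ 2 =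
      k * #A + lam * #A.offDiag := by
  -- The square counts the pairs in `A × A` adjacent to `y`; double counting turns the sum into
  -- `∑ (u, w) ∈ A × A, |N u ∩ N w|`, which splits along the diagonal.
  have hsq : ∀ y, #{u ∈ A | G.Adj u y} ^ 2 =
      #(bipartiteBelow (fun p y => G.Adj p.1 y ∧ G.Adj p.2 y) (A ×ˢ A) y) := by
    intro y
    rw [sq, ← card_product, ← filter_product]
    rfl
  have hpair : ∀ p ∈ A ×ˢ A, #{y ∈ A.biUnion (fun u => G.neighborFinset u) |
      G.Adj p.1 y ∧ G.Adj p.2 y} = #(G.neighborFinset p.1 ∩ G.neighborFinset p.2) := by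
    intro p hp
    rw [mem_product] at hp
    rw [filter_and, filter_adj_biUnion_neighborFinset hp.1, filter_adj_biUnion_neighborFinset hp.2]
  simp only [hsq, ← sum_card_bipartiteAbove_eq_sum_card_bipartiteBelow, bipartiteAbove]
  have hdiag : ∀ p ∈ A.diag, #(G.neighborFinset p.1 ∩ G.neighborFinset p.2) = k := by
    intro p hp
    rw [(mem_diag.1 hp).2, inter_self, hreg.card_neighborFinset]
  have hoff : ∀ p ∈ A.offDiag, #(G.neighborFinset p.1 ∩ G.neighborFinset p.2) = lam := by
    intro p hp
    obtain ⟨h1, h2, hne⟩ := mem_offDiag.1 hp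
    exact hP _ (hAP h1) _ (hAP h2) hne
  rw [sum_congr rfl hpair, ← diag_union_offDiag, sum_union (disjoint_diag_offDiag A),
    sum_congr rfl hdiag, sum_congr rfl hoff, sum_const, sum_const, diag_card, smul_eq_mul,
    smul_eq_mul, mul_comm #A, mul_comm #A.offDiag]

lemma HasCodegreeOn.sq_le_card_biUnion_mul (hP : G.HasCodegreeOn lam P)
    (hreg : G.IsRegularOfDegree k) {A : Finset V} (hAP : A ⊆ P) :
    (k * #A) ^ 2 ≤ #(A.biUnion fun u => G.neighborFinset u) * (k * #A + lam * #A.offDiag) := by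
  rw [← hP.sum_sq_card_filter_adj hreg hAP, ← sum_card_filter_adj hreg A]
  exact sq_sum_le_card_mul_sum_sq

lemma HasCodegreeOn.neighborBound_le_card_biUnion (hP : G.HasCodegreeOn lam P)
    (hreg : G.IsRegularOfDegree k) (hlk : lam < k) {A : Finset V} (hAP : A ⊆ P) :
    neighborBound k lam #A ≤ #(A.biUnion fun u => G.neighborFinset u) := by
  refine neighborBound_le_of_sq_le lam.cast_nonneg (by exact_mod_cast hlk) (Nat.cast_nonneg _)
    (Nat.cast_nonneg _) ?_
  have h := (Nat.cast_le (α := ℝ)).2 (hP.sq_le_card_biUnion_mul hreg hAP)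
  rw [offDiag_card] at h
  push_cast [Nat.cast_sub (Nat.le_mul_self _)] at h
  exact h

lemma HasCodegreeOn.neighborBound_sub_card_le_card_sdiff (hP : G.HasCodegreeOn lam P)
    (hreg : G.IsRegularOfDegree k) (hlk : lam < k) {A : Finset V} (hAP : A ⊆ P) (B : Finset V) :
    neighborBound k lam #A - #B ≤ #((A.biUnion fun u => G.neighborFinset u) \ B) := by
  have : (#(A.biUnion fun u => G.neighborFinset u) : ℝ) ≤
      #((A.biUnion fun u => G.neighborFinset u) \ B) + #B := by
    exact_mod_cast card_le_card_sdiff_add_card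
  linarith [hP.neighborBound_le_card_biUnion hreg hlk hAP]

lemma HasCodegreeOn.card_le_neighborBound (hP : G.HasCodegreeOn lam P)
    (hreg : G.IsRegularOfDegree k) (hlk : lam < k) {A : Finset V} (hAP : A ⊆ P) :
    (#A : ℝ) ≤ neighborBound k lam #A := by
  rcases A.eq_empty_or_nonempty with rfl | ⟨u, hu⟩
  · simp [neighborBound]
  refine le_neighborBound lam.cast_nonneg (by exact_mod_cast hlk) (Nat.cast_nonneg _) ?_
  have hnat : lam * (#A - 1) ≤ k * (k - 1) :=
    (Nat.mul_le_mul_left _ (Nat.sub_le_sub_right (card_le_card hAP) 1)).trans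
      (hP.mul_card_sub_one_le hreg (hAP hu))
  have hA : 1 ≤ #A := card_pos.2 ⟨u, hu⟩
  have hk : 1 ≤ k := Nat.one_le_of_lt hlk
  have hreal := (Nat.cast_le (α := ℝ)).2 hnat
  push_cast [Nat.cast_sub hA, Nat.cast_sub hk] at hreal
  exact hreal

lemma card_sdiff_add_card_sdiff_le {V₁ V₂ : Finset V} (hdisj : Disjoint V₁ V₂)
    (hbip : ∀ u w : V, G.Adj u w → (u ∈ V₁ ∧ w ∈ V₂) ∨ (u ∈ V₂ ∧ w ∈ V₁)) (X : Finset V) :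
    #(((X ∩ V₁).biUnion fun u => G.neighborFinset u) \ (X ∩ V₂)) +
        #(((X ∩ V₂).biUnion fun u => G.neighborFinset u) \ (X ∩ V₁)) ≤
      #((X.biUnion fun u => G.neighborFinset u) \ X) := by
  have h₁ : ((X ∩ V₁).biUnion fun u => G.neighborFinset u) ⊆ V₂ :=
    biUnion_subset.2 fun u hu => neighborFinset_subset_of_bipartite hdisj hbip (mem_inter.1 hu).2
  have h₂ : ((X ∩ V₂).biUnion fun u => G.neighborFinset u) ⊆ V₁ :=
    biUnion_subset.2 fun u hu => neighborFinset_subset_of_bipartite hdisj.symm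
      (fun u w h => (hbip u w h).symm) (mem_inter.1 hu).2
  have hsub : ∀ {W s : Finset V}, s ⊆ W → s ⊆ X.biUnion (fun u => G.neighborFinset u) →
      s \ (X ∩ W) ⊆ (X.biUnion fun u => G.neighborFinset u) \ X := by
    intro W s hW hN y hy
    simp only [mem_sdiff, mem_inter] at hy ⊢
    exact ⟨hN hy.1, fun hX => hy.2 ⟨hX, hW hy.1⟩⟩
  rw [← card_union_of_disjoint (hdisj.symm.mono (sdiff_subset.trans h₁) (sdiff_subset.trans h₂))]
  exact card_le_card (union_subset
    (hsub h₁ (biUnion_subset_biUnion_of_subset_left _ inter_subset_left))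
    (hsub h₂ (biUnion_subset_biUnion_of_subset_left _ inter_subset_left)))

end SimpleGraph

theorem stmt18_general {V : Type*} [Fintype V] [DecidableEq V]
    (G : SimpleGraph V) [DecidableRel G.Adj]
    (V1 V2 : Finset V) (hunion : V1 ∪ V2 = Finset.univ) (hdisj : Disjoint V1 V2)
    (v k lam : ℕ) (hkl : lam < k)
    (hbip : ∀ u w : V, G.Adj u w → (u ∈ V1 ∧ w ∈ V2) ∨ (u ∈ V2 ∧ w ∈ V1))
    (hdeg : ∀ u : V, G.degree u = k)
    (hlam : ∀ u w : V, u ≠ w →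
      ((u ∈ V1 ∧ w ∈ V1) ∨ (u ∈ V2 ∧ w ∈ V2)) →
      (G.neighborFinset u ∩ G.neighborFinset w).card = lam)
    (f : ℝ → ℝ)
    (hf : ∀ x : ℝ, f x = (k : ℝ)^2 * x / (k + lam * (x - 1)) + x)
    (X : Finset V)
    (z : ℝ) (hz : z ∈ Set.Icc (0 : ℝ) (v : ℝ)) (hfz : f z = X.card) :
    f ((X.card : ℝ) - z) - X.card ≤
      (((X.biUnion (fun u => G.neighborFinset u)) \ X).card : ℝ) := by
  have hlam₀ : (0 : ℝ) ≤ lam := lam.cast_nonneg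
  have hlk : (lam : ℝ) < k := by exact_mod_cast hkl
  have hP₁ : G.HasCodegreeOn lam V1 := fun u hu w hw hne => hlam u w hne (.inl ⟨hu, hw⟩)
  have hP₂ : G.HasCodegreeOn lam V2 := fun u hu w hw hne => hlam u w hne (.inr ⟨hu, hw⟩)
  have hcard : (#X : ℝ) = #(X ∩ V1) + #(X ∩ V2) := by
    rw [← Nat.cast_add,
      ← card_union_of_disjoint (hdisj.mono inter_subset_right inter_subset_right),
      ← inter_union_distrib_left, hunion, inter_univ]
  have hfg : ∀ x, f x = neighborBound k lam x + x := hf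
  have key := apply_add_sub_sub_le_add (monotoneOn_neighborBound hlam₀ hlk)
    (fun a b z => neighborBound_add_neighborBound_le hlam₀ hlk) (Nat.cast_nonneg _)
    (Nat.cast_nonneg _) (hP₁.card_le_neighborBound hdeg hkl inter_subset_right)
    (hP₂.card_le_neighborBound hdeg hkl inter_subset_right) hz.1 (by rw [← hfg, hfz, hcard])
    (hP₁.neighborBound_sub_card_le_card_sdiff hdeg hkl inter_subset_right (X ∩ V2))
    (hP₂.neighborBound_sub_card_le_card_sdiff hdeg hkl inter_subset_right (X ∩ V1))
    (Nat.cast_nonneg _) (Nat.cast_nonneg _)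
  calc f (#X - z) - #X = neighborBound k lam (#(X ∩ V1) + #(X ∩ V2) - z) - z := by
        rw [hfg, hcard]
        ring
    _ ≤ _ := key
    _ ≤ _ := by exact_mod_cast SimpleGraph.card_sdiff_add_card_sdiff_le hdisj hbip X

/-- Theorem 2.2: let G be a (v,k,λ)-graph (bipartite with parts V₁, V₂ of size
v, k-regular, any two vertices in the same part having exactly λ common
neighbours) with k > λ, and let `f(x) = k²x/(k+λ(x-1)) + x`. Then for any
nonempty X ⊆ V(G), `|N(X)| ≥ f(|X| - f⁻¹(|X|)) - |X|`, where `f⁻¹(|X|)` is the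
unique `z ∈ [0,v]` with `f z = |X|`. -/
theorem stmt18 {V : Type*} [Fintype V] [DecidableEq V]
    (G : SimpleGraph V) [DecidableRel G.Adj]
    (V1 V2 : Finset V) (hunion : V1 ∪ V2 = Finset.univ) (hdisj : Disjoint V1 V2)
    (v k lam : ℕ) (hk : 0 < k) (hkl : lam < k)
    (hv1 : V1.card = v) (hv2 : V2.card = v)
    (hbip : ∀ u w : V, G.Adj u w → (u ∈ V1 ∧ w ∈ V2) ∨ (u ∈ V2 ∧ w ∈ V1))
    (hdeg : ∀ u : V, G.degree u = k)
    (hlam : ∀ u w : V, u ≠ w →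
      ((u ∈ V1 ∧ w ∈ V1) ∨ (u ∈ V2 ∧ w ∈ V2)) →
      (G.neighborFinset u ∩ G.neighborFinset w).card = lam)
    (f : ℝ → ℝ)
    (hf : ∀ x : ℝ, f x = (k : ℝ)^2 * x / (k + lam * (x - 1)) + x)
    (X : Finset V) (hX : X.Nonempty)
    (z : ℝ) (hz : z ∈ Set.Icc (0 : ℝ) (v : ℝ)) (hfz : f z = X.card) :
    f ((X.card : ℝ) - z) - X.card ≤
      (((X.biUnion (fun u => G.neighborFinset u)) \ X).card : ℝ) :=
  stmt18_general G V1 V2 hunion hdisj v k lam hkl hbip hdeg hlam f hf X z hz hfz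
end
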